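/- arXiv:1605.01240 — 3 statements merged into one kernel-verified Lean document; each statement's English description precedes it below -/
import Mathlib

section
/- Let F be a finite set, let g and m be natural numbers with m ≥ 1, and let b_1, …, b_m : F → Z_2 be functions such that (i) the support of each b_i has size at least g, (ii) the support of the pointwise sum b_1 + … + b_m (computed in Z_2) has size at least g, and (iii) every element of F lies in the support of at most two of the functions b_1, …, b_m. Then g·(m + 1) ≤ 2·|F|. (This is the counting argument underlying Theorem 3 of the paper.) -/
open Finset

/-- A finite simplicial complex on a finite vertex type `V`:
a finite nonempty collection of nonempty finite sets (faces)
closed under taking nonempty subsets. -/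
structure SComplex (V : Type) [DecidableEq V] [Fintype V] where
  faces : Finset (Finset V)
  nonempty : faces.Nonempty
  no_empty : ∀ σ ∈ faces, σ ≠ ∅
  down_closed : ∀ σ ∈ faces, ∀ τ, τ ⊆ σ → τ ≠ ∅ → τ ∈ faces

namespace SComplex

variable {V : Type} [DecidableEq V] [Fintype V]

/-- The set of faces of dimension `i` (i.e. of cardinality `i+1`). -/
def facesDim (K : SComplex V) (i : ℕ) : Finset (Finset V) :=
  K.faces.filter (fun σ => σ.card = i + 1)

/-- `fnum K i` is the face number `f_i`. -/
def fnum (K : SComplex V) (i : ℕ) : ℕ := (K.facesDim i).card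

/-- The space of `Z_2` `i`-chains: functions from the `i`-faces to `Z_2`. -/
abbrev Chains (K : SComplex V) (i : ℕ) : Type := {σ // σ ∈ K.facesDim i} → ZMod 2

/-- The boundary map `∂_i : C_i → C_{i-1}` (and `∂_0 = 0`): the value of `∂ c` on an
`(i-1)`-face `τ` is the sum over `i`-faces `σ ⊇ τ` of `c σ`. -/
def boundary (K : SComplex V) (i : ℕ) : Chains K i →ₗ[ZMod 2] Chains K (i - 1) :=
  if i = 0 then 0 else
  { toFun := fun c τ =>
      ∑ σ : {σ // σ ∈ K.facesDim i}, if (τ : Finset V) ⊆ (σ : Finset V) then c σ else 0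
    map_add' := by
      intro c d
      funext τ
      show (∑ σ : {σ // σ ∈ K.facesDim i}, _) = _
      rw [Pi.add_apply, ← Finset.sum_add_distrib]
      apply Finset.sum_congr rfl
      intro σ _
      by_cases h : (τ : Finset V) ⊆ (σ : Finset V) <;> simp [h]
    map_smul' := by
      intro a c
      funext τ
      show (∑ σ : {σ // σ ∈ K.facesDim i}, _) = _
      rw [RingHom.id_apply, Pi.smul_apply, smul_eq_mul, Finset.mul_sum]
      apply Finset.sum_congr rfl
      intro σ _
      by_cases h : (τ : Finset V) ⊆ (σ : Finset V) <;> simp [h] }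

/-- The `i`-th `Z_2` Betti number: `dim ker ∂_i − rank ∂_{i+1}`. -/
noncomputable def betti (K : SComplex V) (i : ℕ) : ℕ :=
  Module.finrank (ZMod 2) (LinearMap.ker (K.boundary i)) -
    Module.finrank (ZMod 2) (LinearMap.range (K.boundary (i + 1)))

/-- The number of `i`-faces in the support of a chain. -/
def suppCard {K : SComplex V} {i : ℕ} (c : Chains K i) : ℕ :=
  (Finset.univ.filter (fun σ => c σ ≠ 0)).card

/-- The girth: the minimal support size of a nonzero `d`-cycle. -/
noncomputable def girth (K : SComplex V) (d : ℕ) : ℕ :=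
  sInf {n | ∃ c : Chains K d, c ∈ LinearMap.ker (K.boundary d) ∧ c ≠ 0 ∧ suppCard c = n}

/-- `Z_d(K)` admits an `m`-complete basis: a basis of the space of `d`-cycles such that every
`d`-face lies in the support of at most `m` basis elements. -/
def HasCompleteBasis (K : SComplex V) (d m : ℕ) : Prop :=
  ∃ (ι : Type) (_ : Fintype ι) (b : Module.Basis ι (ZMod 2) (LinearMap.ker (K.boundary d))),
    ∀ σ : {σ // σ ∈ K.facesDim d},
      (Finset.univ.filter (fun i : ι => (b i).1 σ ≠ 0)).card ≤ m

/-- `K` is `d`-dimensional: `d` is the maximal dimension of a face. -/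
def IsDim (K : SComplex V) (d : ℕ) : Prop :=
  (∀ σ ∈ K.faces, σ.card ≤ d + 1) ∧ ∃ σ ∈ K.faces, σ.card = d + 1

/-- `K` is pure `d`-dimensional: every face is contained in a `d`-face. -/
def IsPure (K : SComplex V) (d : ℕ) : Prop :=
  ∀ σ ∈ K.faces, ∃ τ ∈ K.faces, σ ⊆ τ ∧ τ.card = d + 1

/-- A `d`-dimensional complex is balanced if its vertices can be colored with `d+1` colors
so that the coloring is injective on every face. -/
def IsBalanced (K : SComplex V) (d : ℕ) : Prop :=
  ∃ coloring : V → Fin (d + 1), ∀ σ ∈ K.faces, Set.InjOn coloring (σ : Set V)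

/-- The `d`-skeleton of `K`: all faces of dimension at most `d`. -/
def skeleton (K : SComplex V) (d : ℕ) : SComplex V where
  faces := K.faces.filter (fun σ => σ.card ≤ d + 1)
  nonempty := by
    obtain ⟨σ, hσ⟩ := K.nonempty
    obtain ⟨v, hv⟩ := Finset.nonempty_iff_ne_empty.mpr (K.no_empty σ hσ)
    refine ⟨{v}, Finset.mem_filter.mpr ⟨K.down_closed σ hσ {v}
      (Finset.singleton_subset_iff.mpr hv) (Finset.singleton_ne_empty v), by simp⟩⟩
  no_empty := by
    intro σ hσ
    exact K.no_empty σ (Finset.mem_filter.mp hσ).1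
  down_closed := by
    intro σ hσ τ hτσ hτ
    rw [Finset.mem_filter] at hσ ⊢
    exact ⟨K.down_closed σ hσ.1 τ hτσ hτ, le_trans (Finset.card_le_card hτσ) hσ.2⟩

end SComplex

open SComplex

/-!
Append `b₁ + ⋯ + bₘ` to the family as an `(m+1)`-st member. The enlarged family sums to zero
over `Z_2`, so every `x ∈ F` lies in an even number of its supports, at most three by (iii),
hence at most two. Double counting the pairs (member, point of its support) gives
`g (m + 1) ≤ 2 |F|`.
-/

def appendSum {ι M : Type*} [Fintype ι] [AddCommMonoid M] (a : ι → M) : Option ι → M :=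
  fun o => o.elim (∑ i, a i) a

section AppendSum

variable {ι : Type*} [Fintype ι]

@[simp]
lemma appendSum_none {M : Type*} [AddCommMonoid M] (a : ι → M) :
    appendSum a none = ∑ i, a i := rfl

@[simp]
lemma appendSum_some {M : Type*} [AddCommMonoid M] (a : ι → M) (i : ι) :
    appendSum a (some i) = a i := rfl

lemma appendSum_apply {α M : Type*} [AddCommMonoid M] (a : ι → α → M) (o : Option ι) (x : α) :
    appendSum a o x = appendSum (a · x) o := by
  cases o <;> simp [Finset.sum_apply]

lemma sum_appendSum_zmod_two (a : ι → ZMod 2) : ∑ o, appendSum a o = 0 := by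
  rw [Fintype.sum_option, appendSum_none]
  exact CharTwo.add_self_eq_zero _

lemma card_filter_option_le (p : Option ι → Prop) [DecidablePred p] :
    #{o | p o} ≤ #{i | p (some i)} + 1 := by
  rw [card_filter, card_filter, Fintype.sum_option, add_comm]
  gcongr
  split_ifs <;> simp

end AppendSum

lemma ZMod.sum_eq_card_filter_ne_zero {ι : Type*} (s : Finset ι) (f : ι → ZMod 2) :
    ∑ i ∈ s, f i = #{i ∈ s | f i ≠ 0} := by
  rw [← sum_filter_ne_zero, ← nsmul_one, ← sum_const]
  have hunit : ∀ c : ZMod 2, c ≠ 0 → c = 1 := by decide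
  exact sum_congr rfl fun i hi => hunit _ (mem_filter.mp hi).2

lemma even_card_filter_ne_zero_of_sum_eq_zero {κ : Type*} [Fintype κ] (c : κ → ZMod 2)
    (hc : ∑ k, c k = 0) : Even #{k | c k ≠ 0} := by
  rwa [ZMod.sum_eq_card_filter_ne_zero, ZMod.natCast_eq_zero_iff_even] at hc

lemma card_filter_appendSum_ne_zero_le_two {ι : Type*} [Fintype ι] (a : ι → ZMod 2)
    (ha : #{i | a i ≠ 0} ≤ 2) : #{o | appendSum a o ≠ 0} ≤ 2 := by
  have heven := even_card_filter_ne_zero_of_sum_eq_zero _ (sum_appendSum_zmod_two a)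
  have hle : #{o | appendSum a o ≠ 0} ≤ 3 :=
    (card_filter_option_le _).trans (Nat.add_le_add_right ha 1)
  rcases heven with ⟨k, hk⟩
  omega

theorem counting_two_complete_general {F : Type} [Fintype F] (g m : ℕ)
    (b : Fin m → F → ZMod 2)
    (hsupp : ∀ i : Fin m, g ≤ (Finset.univ.filter (fun x : F => b i x ≠ 0)).card)
    (hsum : g ≤ (Finset.univ.filter (fun x : F => (∑ i : Fin m, b i) x ≠ 0)).card)
    (htwo : ∀ x : F, (Finset.univ.filter (fun i : Fin m => b i x ≠ 0)).card ≤ 2) :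
    g * (m + 1) ≤ 2 * Fintype.card F := by
  have hrows : ∀ o ∈ (univ : Finset (Option (Fin m))),
      g ≤ #((univ : Finset F).bipartiteAbove (fun o x => appendSum b o x ≠ 0) o) := by
    rintro (_ | i) -
    exacts [hsum, hsupp i]
  have hcols : ∀ x ∈ (univ : Finset F),
      #((univ : Finset (Option (Fin m))).bipartiteBelow (fun o x => appendSum b o x ≠ 0) x) ≤ 2 :=
    fun x _ => by
      simpa only [bipartiteBelow, appendSum_apply] using
        card_filter_appendSum_ne_zero_le_two (b · x) (htwo x)
  simpa [mul_comm] using card_nsmul_le_card_nsmul _ hrows hcols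

/-- the counting argument behind Theorem 3. -/
theorem counting_two_complete {F : Type} [Fintype F] [DecidableEq F] (g m : ℕ) (hm : 1 ≤ m)
    (b : Fin m → F → ZMod 2)
    (hsupp : ∀ i : Fin m, g ≤ (Finset.univ.filter (fun x : F => b i x ≠ 0)).card)
    (hsum : g ≤ (Finset.univ.filter (fun x : F => (∑ i : Fin m, b i) x ≠ 0)).card)
    (htwo : ∀ x : F, (Finset.univ.filter (fun i : Fin m => b i x ≠ 0)).card ≤ 2) :
    g * (m + 1) ≤ 2 * Fintype.card F :=
  counting_two_complete_general g m b hsupp hsum htwo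
end

section
/- Let d ≥ 0 and let S be a finite (d+1)-dimensional simplicial complex such that: every d-dimensional face of S is contained in exactly two (d+1)-dimensional faces; the space Z_{d+1}(S) of Z_2 (d+1)-cycles of S has dimension 1 (equivalently, the only nonzero (d+1)-cycle is the sum of all (d+1)-faces); and β_d(S) = 0. Then for every subcomplex Σ of S of dimension at most d, the space Z_d(Σ) of Z_2 d-cycles of Σ admits a 2-complete basis. (This is the combinatorial core of Theorem 2 of the paper; such an S is, e.g., any triangulated (d+1)-sphere.) -/
open Finset

open SComplex

/-!
Cut `S` along `T`: two facets of `S` are adjacent when they share a `d`-face outside `T`, and the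
chambers are the classes of the equivalence relation this generates. Since every `d`-face lies in
exactly two facets, a `(d+1)`-chain has boundary supported in `T` exactly when it is constant on
chambers. A `d`-cycle of `T`, extended by zero, is a `d`-cycle of `S`, hence (as `β_d(S) = 0`) the
boundary of such a chain; so the boundaries of the chambers, restricted to `T`, span `Z_d(T)`.
A `d`-face of `T` lies in only two facets, hence in the support of at most two chamber
boundaries, and any basis extracted from this spanning family is 2-complete.
-/

namespace SComplex

variable {V : Type} [DecidableEq V] [Fintype V] {S T : SComplex V} {d : ℕ}

lemma mem_facesDim {K : SComplex V} {i : ℕ} {σ : Finset V} :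
    σ ∈ K.facesDim i ↔ σ ∈ K.faces ∧ σ.card = i + 1 :=
  Finset.mem_filter

lemma boundary_zero (K : SComplex V) : K.boundary 0 = 0 := if_pos rfl

lemma boundary_succ_apply (K : SComplex V) (i : ℕ) (c : Chains K (i + 1))
    (τ : {τ // τ ∈ K.facesDim i}) :
    K.boundary (i + 1) c τ = ∑ σ, if (τ : Finset V) ⊆ σ.1 then c σ else 0 := by
  rw [boundary, if_neg i.succ_ne_zero]
  rfl

lemma card_faces_between_eq_two {K : SComplex V} {i : ℕ} {τ F : Finset V} (hτ : τ.card = i + 1)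
    (hF : F ∈ K.facesDim (i + 2)) (hτF : τ ⊆ F) :
    #{σ : {σ // σ ∈ K.facesDim (i + 1)} | τ ⊆ σ ∧ (σ : Finset V) ⊆ F} = 2 := by
  obtain ⟨hFK, hFc⟩ := mem_facesDim.mp hF
  have hcard : #(F \ τ) = 2 := by rw [card_sdiff_of_subset hτF, hFc, hτ]; omega
  rw [← hcard]
  symm
  refine card_bij (fun x hx => ⟨insert x τ, mem_facesDim.mpr ⟨?_, ?_⟩⟩) ?_ ?_ ?_
  · exact K.down_closed F hFK _ (insert_subset (mem_sdiff.mp hx).1 hτF) (insert_ne_empty _ _)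
  · rw [card_insert_of_notMem (mem_sdiff.mp hx).2, hτ]
  · intro x hx
    simp only [mem_filter, mem_univ, true_and]
    exact ⟨subset_insert _ _, insert_subset (mem_sdiff.mp hx).1 hτF⟩
  · intro x hx y hy hxy
    exact (insert_inj (mem_sdiff.mp hx).2).mp (congrArg Subtype.val hxy)
  · rintro ⟨σ, hσ⟩ hσ'
    simp only [mem_filter, mem_univ, true_and] at hσ'
    obtain ⟨hτσ, hσF⟩ := hσ'
    obtain ⟨x, hx⟩ : ∃ x, σ \ τ = {x} := by
      apply card_eq_one.mp
      rw [card_sdiff_of_subset hτσ, (mem_facesDim.mp hσ).2, hτ]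
      omega
    have hxσ : x ∈ σ \ τ := hx ▸ mem_singleton_self x
    refine ⟨x, mem_sdiff.mpr ⟨hσF (mem_sdiff.mp hxσ).1, (mem_sdiff.mp hxσ).2⟩, ?_⟩
    apply Subtype.ext
    change insert x τ = σ
    rw [insert_eq, ← hx, sdiff_union_of_subset hτσ]

lemma boundary_boundary (K : SComplex V) (i : ℕ) (c : Chains K (i + 1)) :
    K.boundary i (K.boundary (i + 1) c) = 0 := by
  cases i with
  | zero => rw [boundary_zero]; rfl
  | succ i =>
    funext τ
    have hτ : (τ : Finset V).card = i + 1 := (mem_facesDim.mp τ.2).2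
    have hpull : ∀ σ : {σ // σ ∈ K.facesDim (i + 1)},
        (if (τ : Finset V) ⊆ σ then
          ∑ F : {F // F ∈ K.facesDim (i + 2)}, if (σ : Finset V) ⊆ F then c F else 0 else 0) =
        ∑ F : {F // F ∈ K.facesDim (i + 2)},
          if (τ : Finset V) ⊆ σ ∧ (σ : Finset V) ⊆ F then c F else 0 := by
      intro σ
      split_ifs with h <;> simp [h]
    simp only [boundary_succ_apply, Pi.zero_apply, hpull]
    rw [sum_comm]
    refine sum_eq_zero fun F _ => ?_
    rw [← sum_filter, sum_const]
    by_cases hτF : (τ : Finset V) ⊆ F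
    · rw [show #_ = 2 by convert card_faces_between_eq_two hτ F.2 hτF, two_nsmul,
        CharTwo.add_self_eq_zero]
    · rw [filter_false_of_mem fun σ _ h => hτF (h.1.trans h.2), card_empty, zero_smul]

lemma facesDim_mono (hsub : T.faces ⊆ S.faces) (i : ℕ) : T.facesDim i ⊆ S.facesDim i :=
  filter_subset_filter _ hsub

def faceInclusion (hsub : T.faces ⊆ S.faces) (i : ℕ) :
    {σ // σ ∈ T.facesDim i} → {σ // σ ∈ S.facesDim i} :=
  fun σ => ⟨σ, facesDim_mono hsub i σ.2⟩

lemma faceInclusion_injective (hsub : T.faces ⊆ S.faces) (i : ℕ) :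
    Function.Injective (faceInclusion hsub i) :=
  fun _ _ h => Subtype.ext (Subtype.mk.inj h)

def SupportedIn (T : SComplex V) {i : ℕ} (c : Chains S i) : Prop :=
  ∀ σ : {σ // σ ∈ S.facesDim i}, (σ : Finset V) ∉ T.faces → c σ = 0

noncomputable def restrict (hsub : T.faces ⊆ S.faces) (i : ℕ) :
    Chains S i →ₗ[ZMod 2] Chains T i :=
  LinearMap.funLeft (ZMod 2) (ZMod 2) (faceInclusion hsub i)

def extendByZero {i : ℕ} (z : Chains T i) : Chains S i :=
  fun σ => if h : (σ : Finset V) ∈ T.facesDim i then z ⟨σ, h⟩ else 0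

lemma restrict_extendByZero (hsub : T.faces ⊆ S.faces) {i : ℕ} (z : Chains T i) :
    restrict hsub i (extendByZero z) = z :=
  funext fun σ => dif_pos σ.2

lemma supportedIn_extendByZero {i : ℕ} (z : Chains T i) :
    SupportedIn T (extendByZero z : Chains S i) :=
  fun _ hσ => dif_neg fun h => hσ (mem_facesDim.mp h).1

lemma boundary_restrict (hsub : T.faces ⊆ S.faces) {i : ℕ} (c : Chains S (i + 1))
    (hc : SupportedIn T c) (τ : {τ // τ ∈ T.facesDim i}) :
    T.boundary (i + 1) (restrict hsub (i + 1) c) τ =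
      S.boundary (i + 1) c (faceInclusion hsub i τ) := by
  rw [boundary_succ_apply, boundary_succ_apply]
  refine Fintype.sum_of_injective _ (faceInclusion_injective hsub (i + 1)) _ _ ?_ fun _ => rfl
  intro σ hσ
  rw [hc σ fun hσT => hσ ⟨⟨σ, mem_facesDim.mpr ⟨hσT, (mem_facesDim.mp σ.2).2⟩⟩, rfl⟩, ite_self]

lemma restrict_mem_ker (hsub : T.faces ⊆ S.faces) {i : ℕ} {c : Chains S i}
    (hc : c ∈ LinearMap.ker (S.boundary i)) (hcT : SupportedIn T c) :
    restrict hsub i c ∈ LinearMap.ker (T.boundary i) := by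
  cases i with
  | zero => rw [boundary_zero]; exact LinearMap.mem_ker.mpr rfl
  | succ i => exact funext fun τ => (boundary_restrict hsub c hcT τ).trans (congrFun hc _)

lemma extendByZero_mem_ker (hsub : T.faces ⊆ S.faces) {i : ℕ} {z : Chains T i}
    (hz : z ∈ LinearMap.ker (T.boundary i)) :
    (extendByZero z : Chains S i) ∈ LinearMap.ker (S.boundary i) := by
  cases i with
  | zero => rw [boundary_zero]; exact LinearMap.mem_ker.mpr rfl
  | succ i =>
    funext τ
    by_cases hτ : (τ : Finset V) ∈ T.faces
    · have hτT : (τ : Finset V) ∈ T.facesDim i := mem_facesDim.mpr ⟨hτ, (mem_facesDim.mp τ.2).2⟩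
      have h := boundary_restrict hsub (extendByZero z) (supportedIn_extendByZero z) ⟨τ, hτT⟩
      rw [restrict_extendByZero] at h
      exact h.symm.trans (congrFun hz _)
    · rw [boundary_succ_apply]
      refine sum_eq_zero fun σ _ => ite_eq_right_iff.mpr fun hτσ =>
        supportedIn_extendByZero z σ fun hσ =>
          hτ (T.down_closed _ hσ _ hτσ (S.no_empty _ (mem_facesDim.mp τ.2).1))

lemma range_boundary_eq_ker_of_betti_eq_zero (h : S.betti d = 0) :
    LinearMap.range (S.boundary (d + 1)) = LinearMap.ker (S.boundary d) := by
  refine Submodule.eq_of_le_of_finrank_le ?_ (Nat.sub_eq_zero_iff_le.mp h)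
  rintro _ ⟨c, rfl⟩
  exact boundary_boundary S d c

def HasTwoCofaces (S : SComplex V) (d : ℕ) : Prop :=
  ∀ σ ∈ S.facesDim d, #{F ∈ S.facesDim (d + 1) | σ ⊆ F} = 2

lemma HasTwoCofaces.exists_cofaces (hS : S.HasTwoCofaces d) (σ : {σ // σ ∈ S.facesDim d}) :
    ∃ A B : {F // F ∈ S.facesDim (d + 1)}, A ≠ B ∧ (σ : Finset V) ⊆ A ∧ (σ : Finset V) ⊆ B := by
  obtain ⟨a, b, hab, hσab⟩ := card_eq_two.mp (hS σ σ.2)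
  have ha : a ∈ {F ∈ S.facesDim (d + 1) | (σ : Finset V) ⊆ F} := by simp [hσab]
  have hb : b ∈ {F ∈ S.facesDim (d + 1) | (σ : Finset V) ⊆ F} := by simp [hσab]
  rw [mem_filter] at ha hb
  exact ⟨⟨a, ha.1⟩, ⟨b, hb.1⟩, fun h => hab (Subtype.mk.inj h), ha.2, hb.2⟩

lemma HasTwoCofaces.boundary_apply (hS : S.HasTwoCofaces d) {σ : {σ // σ ∈ S.facesDim d}}
    {A B : {F // F ∈ S.facesDim (d + 1)}} (hAB : A ≠ B) (hA : (σ : Finset V) ⊆ A)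
    (hB : (σ : Finset V) ⊆ B) (c : Chains S (d + 1)) :
    S.boundary (d + 1) c σ = c A + c B := by
  have hAB' : (A : Finset V) ≠ B := fun h => hAB (Subtype.ext h)
  have hcofaces : {F ∈ S.facesDim (d + 1) | (σ : Finset V) ⊆ F} = {A.1, B.1} := by
    refine (eq_of_subset_of_card_le ?_ ?_).symm
    · simp [insert_subset_iff, A.2, B.2, hA, hB]
    · rw [hS σ σ.2, card_pair hAB']
  rw [boundary_succ_apply, Fintype.sum_eq_add A B hAB, if_pos hA, if_pos hB]
  rintro G ⟨hGA, hGB⟩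
  refine if_neg fun hσG => ?_
  have hG : (G : Finset V) ∈ ({A.1, B.1} : Finset (Finset V)) := by
    rw [← hcofaces, mem_filter]
    exact ⟨G.2, hσG⟩
  rcases mem_insert.mp hG with h | h
  · exact hGA (Subtype.ext h)
  · exact hGB (Subtype.ext (mem_singleton.mp h))

def AdjacentOutside (S T : SComplex V) (d : ℕ) (F G : {F // F ∈ S.facesDim (d + 1)}) : Prop :=
  ∃ σ ∈ S.facesDim d, σ ∉ T.faces ∧ σ ⊆ F ∧ σ ⊆ G

/-- A quotient by a relation identifies exactly the elements related by its equivalence closure,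
so chambers are the connected components of the facets of `S` glued along `d`-faces outside `T`. -/
abbrev Chamber (S T : SComplex V) (d : ℕ) : Type := Quot (AdjacentOutside S T d)

noncomputable def chamberBoundary (hsub : T.faces ⊆ S.faces) :
    (Chamber S T d → ZMod 2) →ₗ[ZMod 2] Chains T d :=
  restrict hsub d ∘ₗ S.boundary (d + 1) ∘ₗ LinearMap.funLeft (ZMod 2) (ZMod 2) (Quot.mk _)

lemma supportedIn_boundary_iff (hS : S.HasTwoCofaces d) {c : Chains S (d + 1)} :
    SupportedIn T (S.boundary (d + 1) c) ↔ ∀ F G, AdjacentOutside S T d F G → c F = c G := by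
  constructor
  · rintro hc F G ⟨σ, hσ, hσT, hF, hG⟩
    by_cases hFG : F = G
    · rw [hFG]
    rw [← CharTwo.add_eq_zero, ← hS.boundary_apply (σ := ⟨σ, hσ⟩) hFG hF hG]
    exact hc ⟨σ, hσ⟩ hσT
  · intro hc σ hσT
    obtain ⟨A, B, hAB, hA, hB⟩ := hS.exists_cofaces σ
    rw [hS.boundary_apply hAB hA hB, hc A B ⟨σ, σ.2, hσT, hA, hB⟩, CharTwo.add_self_eq_zero]

lemma chamberBoundary_mem_ker (hS : S.HasTwoCofaces d) (hsub : T.faces ⊆ S.faces)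
    (a : Chamber S T d → ZMod 2) : chamberBoundary hsub a ∈ LinearMap.ker (T.boundary d) :=
  restrict_mem_ker hsub (boundary_boundary S d _)
    ((supportedIn_boundary_iff hS).mpr fun _ _ h => congrArg a (Quot.sound h))

lemma exists_chamberBoundary_eq (hS : S.HasTwoCofaces d) (hβ : S.betti d = 0)
    (hsub : T.faces ⊆ S.faces) {z : Chains T d} (hz : z ∈ LinearMap.ker (T.boundary d)) :
    ∃ a, chamberBoundary hsub a = z := by
  obtain ⟨c, hc⟩ : (extendByZero z : Chains S d) ∈ LinearMap.range (S.boundary (d + 1)) := by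
    rw [range_boundary_eq_ker_of_betti_eq_zero hβ]
    exact extendByZero_mem_ker hsub hz
  have hconst := (supportedIn_boundary_iff hS).mp (hc ▸ supportedIn_extendByZero z)
  refine ⟨Quot.lift c hconst, ?_⟩
  change restrict hsub d (S.boundary (d + 1) c) = z
  rw [hc, restrict_extendByZero]

lemma eq_or_eq_of_chamberBoundary_single_ne_zero [DecidableEq (Chamber S T d)]
    (hS : S.HasTwoCofaces d) (hsub : T.faces ⊆ S.faces) {σ : {σ // σ ∈ T.facesDim d}}
    {A B : {F // F ∈ S.facesDim (d + 1)}}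
    (hAB : A ≠ B) (hA : (σ : Finset V) ⊆ A) (hB : (σ : Finset V) ⊆ B) {q : Chamber S T d}
    (h : chamberBoundary hsub (Pi.single q 1) σ ≠ 0) :
    q = Quot.mk _ A ∨ q = Quot.mk _ B := by
  by_contra! hq
  apply h
  change S.boundary (d + 1) (fun F => (Pi.single q 1 : Chamber S T d → ZMod 2) (Quot.mk _ F))
    (faceInclusion hsub d σ) = 0
  rw [hS.boundary_apply (σ := faceInclusion hsub d σ) hAB hA hB, Pi.single_eq_of_ne hq.1.symm,
    Pi.single_eq_of_ne hq.2.symm, add_zero]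

lemma hasCompleteBasis_of_surjective {K : SComplex V} {m : ℕ} {ι : Type} [Finite ι]
    [DecidableEq ι]
    (f : (ι → ZMod 2) →ₗ[ZMod 2] LinearMap.ker (K.boundary d)) (hf : Function.Surjective f)
    (hm : ∀ σ, ∃ s : Finset ι, #s ≤ m ∧ ∀ i, (f (Pi.single i 1) : Chains K d) σ ≠ 0 → i ∈ s) :
    K.HasCompleteBasis d m := by
  set v : ι → LinearMap.ker (K.boundary d) := fun i => f (Pi.single i 1)
  have hv : Submodule.span (ZMod 2) (Set.range v) = ⊤ := by
    have : v = f ∘ Pi.basisFun (ZMod 2) ι := funext fun i => by simp [v]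
    rw [this, Set.range_comp, Submodule.span_image, (Pi.basisFun _ _).span_eq, Submodule.map_top,
      LinearMap.range_eq_top.mpr hf]
  obtain ⟨κ, a, ha, hspan, hli⟩ := exists_linearIndependent'.{0} (ZMod 2) v
  have : Finite κ := Finite.of_injective a ha
  refine ⟨κ, Fintype.ofFinite κ, Module.Basis.mk hli (by rw [hspan, hv]), fun σ => ?_⟩
  obtain ⟨s, hsm, hs⟩ := hm σ
  refine le_trans (card_le_card_of_injOn a (fun k hk => hs _ ?_) ha.injOn) hsm
  simpa using hk

end SComplex

theorem subcomplex_hasCompleteBasis_general {V : Type} [DecidableEq V] [Fintype V] (d : ℕ)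
    (S : SComplex V)
    (htwo : ∀ σ ∈ S.facesDim d, ((S.facesDim (d + 1)).filter (fun F => σ ⊆ F)).card = 2)
    (hβd : S.betti d = 0)
    (T : SComplex V) (hsub : T.faces ⊆ S.faces) :
    T.HasCompleteBasis d 2 := by
  classical
  have hS : S.HasTwoCofaces d := htwo
  refine hasCompleteBasis_of_surjective
    ((chamberBoundary hsub).codRestrict _ (chamberBoundary_mem_ker hS hsub)) ?_ fun σ => ?_
  · rintro ⟨z, hz⟩
    obtain ⟨a, rfl⟩ := exists_chamberBoundary_eq hS hβd hsub hz
    exact ⟨a, rfl⟩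
  · obtain ⟨A, B, hAB, hA, hB⟩ := hS.exists_cofaces (faceInclusion hsub d σ)
    refine ⟨{Quot.mk _ A, Quot.mk _ B}, card_le_two, fun q hq => ?_⟩
    simpa using eq_or_eq_of_chamberBoundary_single_ne_zero hS hsub hAB hA hB hq

/-- the combinatorial core of Theorem 2. -/
theorem subcomplex_hasCompleteBasis {V : Type} [DecidableEq V] [Fintype V] (d : ℕ)
    (S : SComplex V) (hSdim : S.IsDim (d + 1))
    (htwo : ∀ σ ∈ S.facesDim d, ((S.facesDim (d + 1)).filter (fun F => σ ⊆ F)).card = 2)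
    (hZ : Module.finrank (ZMod 2) (LinearMap.ker (S.boundary (d + 1))) = 1)
    (hβd : S.betti d = 0)
    (T : SComplex V) (hsub : T.faces ⊆ S.faces)
    (hdim : ∀ σ ∈ T.faces, σ.card ≤ d + 1) :
    T.HasCompleteBasis d 2 :=
  subcomplex_hasCompleteBasis_general d S htwo hβd T hsub
end

section
/- (Theorem 4) Let Σ be a finite d-dimensional simplicial complex with β_d(Σ) ≥ 1 such that the space Z_d(Σ) of Z_2 d-cycles admits a 2-complete basis (by Theorem 2 of the paper, this holds whenever Σ is PL embeddable into ℝ^{d+1}), and let g = g(Σ) be its girth. Then for every odd k with 1 ≤ k ≤ d, the inequality (g − 2)·f_d(Σ) ≤ g·( Σ_{i=1}^{k} (−1)^{i−1}·(f_{d−i}(Σ) − β_{d−i}(Σ)) − 1 ) holds (as an inequality of integers). -/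
open Finset

/-! Write `r_j` for the rank of `∂_j`. Rank–nullity and `∂_j ∘ ∂_{j+1} = 0` give
`f_j - β_j = r_j + r_{j+1}`, so for odd `k ≤ d` the alternating sum telescopes to
`r_d + r_{d-k} ≥ r_d = f_d - dim Z_d`. On the other hand the `n = dim Z_d` cycles of a 2-complete
basis, together with their sum, are `n + 1` nonzero cycles, each with support of size at least `g`,
and their supports cover every `d`-face at most twice (a face in two basis supports cancels in the
sum). Hence `g (n + 1) ≤ 2 f_d`, which rearranges to the claimed inequality. -/

theorem Finset.sum_Icc_neg_one_pow_mul_add {R : Type*} [CommRing R] (F : ℕ → R) (k : ℕ) :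
    ∑ i ∈ Icc 1 k, (-1) ^ (i - 1) * (F i + F (i - 1)) = F 0 - (-1) ^ k * F k := by
  induction k with
  | zero => simp
  | succ k ih =>
    rw [sum_Icc_succ_top (Nat.le_add_left 1 k), ih, Nat.add_sub_cancel, pow_succ]
    ring

theorem ZMod.two_sum_eq_card_filter_ne_zero {ι : Type*} (s : Finset ι) (x : ι → ZMod 2) :
    ∑ i ∈ s, x i = #{i ∈ s | x i ≠ 0} := by
  rw [← sum_filter_ne_zero, card_eq_sum_ones, Nat.cast_sum, Nat.cast_one]
  exact sum_congr rfl fun i hi => Fin.eq_one_of_ne_zero _ (mem_filter.mp hi).2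

theorem ZMod.two_card_ne_zero_add_ite_sum_le_two {ι : Type*} [Fintype ι] (x : ι → ZMod 2)
    (hx : #{i | x i ≠ 0} ≤ 2) :
    #{i | x i ≠ 0} + (if ∑ i, x i ≠ 0 then 1 else 0) ≤ 2 := by
  rw [ZMod.two_sum_eq_card_filter_ne_zero]
  split_ifs with h
  · have : #{i | x i ≠ 0} ≠ 2 := fun h2 => h (by rw [h2]; rfl)
    omega
  · omega

theorem ZMod.two_sum_card_support_add_card_support_sum_le {ι α : Type*} [Fintype ι] [Fintype α]
    (v : ι → α → ZMod 2) (hv : ∀ a, #{i | v i a ≠ 0} ≤ 2) :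
    ∑ i, #{a | v i a ≠ 0} + #{a | ∑ i, v i a ≠ 0} ≤ 2 * Fintype.card α := by
  simp_rw [card_filter]
  rw [sum_comm, ← sum_add_distrib, ← card_univ, card_eq_sum_ones, mul_sum, mul_one]
  refine sum_le_sum fun a _ => ?_
  rw [← card_filter]
  exact ZMod.two_card_ne_zero_add_ite_sum_le_two (v · a) (hv a)

namespace SComplex

variable {V : Type} [DecidableEq V] [Fintype V] (K : SComplex V)

theorem boundary_apply {i : ℕ} (hi : i ≠ 0) (c : K.Chains i)
    (τ : {τ // τ ∈ K.facesDim (i - 1)}) :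
    K.boundary i c τ =
      ∑ σ : {σ // σ ∈ K.facesDim i}, if τ.1 ⊆ σ.1 then c σ else 0 := by
  rw [boundary, if_neg hi]
  rfl

theorem card_facesDim_between {m : ℕ} {τ σ : Finset V} (hτ : τ.card = m + 1)
    (hσ : σ ∈ K.facesDim (m + 2)) (hτσ : τ ⊆ σ) :
    ((K.facesDim (m + 1)).filter (fun ρ => τ ⊆ ρ ∧ ρ ⊆ σ)).card = 2 := by
  obtain ⟨hσK, hσc⟩ := mem_filter.mp hσ
  have hbetween : (K.facesDim (m + 1)).filter (fun ρ => τ ⊆ ρ ∧ ρ ⊆ σ) =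
      (σ \ τ).image (insert · τ) := by
    ext ρ
    simp only [facesDim, mem_filter, mem_image, mem_sdiff]
    constructor
    · rintro ⟨⟨-, hρc⟩, hτρ, hρσ⟩
      obtain ⟨x, hx⟩ := card_eq_one.mp
        (show (ρ \ τ).card = 1 by rw [card_sdiff_of_subset hτρ]; omega)
      have hxρ : x ∈ ρ \ τ := hx ▸ mem_singleton_self x
      refine ⟨x, ⟨hρσ (mem_sdiff.mp hxρ).1, (mem_sdiff.mp hxρ).2⟩, ?_⟩
      rw [insert_eq, ← hx, sdiff_union_of_subset hτρ]
    · rintro ⟨x, ⟨hxσ, hxτ⟩, rfl⟩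
      exact ⟨⟨K.down_closed σ hσK _ (insert_subset hxσ hτσ) (insert_ne_empty x τ),
        by rw [card_insert_of_notMem hxτ, hτ]⟩, subset_insert x τ, insert_subset hxσ hτσ⟩
  have hinj : Set.InjOn (insert · τ) (σ \ τ : Finset V) :=
    fun x hx _ _ hxy => (insert_inj (mem_sdiff.mp hx).2).mp hxy
  rw [hbetween, card_image_of_injOn hinj, card_sdiff_of_subset hτσ]
  omega

theorem range_boundary_le_ker_boundary (j : ℕ) :
    LinearMap.range (K.boundary (j + 1)) ≤ LinearMap.ker (K.boundary j) := by
  obtain rfl | ⟨m, rfl⟩ : j = 0 ∨ ∃ m, j = m + 1 := by cases j <;> simp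
  · simp [boundary]
  rintro _ ⟨c, rfl⟩
  rw [LinearMap.mem_ker]
  funext τ
  simp_rw [boundary_apply K (Nat.succ_ne_zero m), boundary_apply K (Nat.succ_ne_zero (m + 1)),
    ite_sum_zero, ← ite_and]
  rw [sum_comm]
  refine sum_eq_zero fun σ _ => ?_
  rw [sum_coe_sort (K.facesDim (m + 1)) (fun ρ => if τ.1 ⊆ ρ ∧ ρ ⊆ σ.1 then c σ else 0),
    ← sum_filter, sum_const]
  by_cases hτσ : τ.1 ⊆ σ.1
  · rw [K.card_facesDim_between (m := m) (mem_filter.mp τ.2).2 σ.2 hτσ, two_nsmul,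
      CharTwo.add_self_eq_zero]
  · rw [filter_false_of_mem fun ρ _ h => hτσ (h.1.trans h.2), card_empty, zero_nsmul]

noncomputable def boundaryRank (j : ℕ) : ℕ :=
  Module.finrank (ZMod 2) (LinearMap.range (K.boundary j))

theorem boundaryRank_add_finrank_ker (j : ℕ) :
    K.boundaryRank j + Module.finrank (ZMod 2) (LinearMap.ker (K.boundary j)) = K.fnum j := by
  rw [boundaryRank, LinearMap.finrank_range_add_finrank_ker, Module.finrank_fintype_fun_eq_card,
    Fintype.card_coe, fnum]

theorem fnum_sub_betti (j : ℕ) :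
    (K.fnum j : ℤ) - K.betti j = K.boundaryRank j + K.boundaryRank (j + 1) := by
  have hle : K.boundaryRank (j + 1) ≤ Module.finrank (ZMod 2) (LinearMap.ker (K.boundary j)) :=
    Submodule.finrank_mono (K.range_boundary_le_ker_boundary j)
  rw [← K.boundaryRank_add_finrank_ker j, betti, ← boundaryRank, Nat.cast_sub hle]
  push_cast
  ring

theorem sum_Icc_neg_one_pow_mul_fnum_sub_betti {d k : ℕ} (hkd : k ≤ d) :
    ∑ i ∈ Icc 1 k, (-1 : ℤ) ^ (i - 1) * ((K.fnum (d - i) : ℤ) - K.betti (d - i)) =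
      K.boundaryRank d - (-1) ^ k * K.boundaryRank (d - k) := by
  have htelescope := Finset.sum_Icc_neg_one_pow_mul_add (fun i => (K.boundaryRank (d - i) : ℤ)) k
  rw [Nat.sub_zero] at htelescope
  rw [← htelescope]
  refine sum_congr rfl fun i hi => ?_
  rw [fnum_sub_betti, show d - i + 1 = d - (i - 1) by grind]

theorem girth_le_suppCard {d : ℕ} {c : K.Chains d} (hc : c ∈ LinearMap.ker (K.boundary d))
    (hc0 : c ≠ 0) : K.girth d ≤ suppCard c :=
  Nat.sInf_le ⟨c, hc, hc0, rfl⟩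

theorem girth_mul_finrank_ker_add_one_le {d : ℕ}
    (hZ : 0 < Module.finrank (ZMod 2) (LinearMap.ker (K.boundary d)))
    (hcb : K.HasCompleteBasis d 2) :
    K.girth d * (Module.finrank (ZMod 2) (LinearMap.ker (K.boundary d)) + 1) ≤ 2 * K.fnum d := by
  obtain ⟨ι, _, b, hb⟩ := hcb
  have hι : Nonempty ι := by
    rw [← Fintype.card_pos_iff, ← Module.finrank_eq_card_basis b]
    exact hZ
  set z := ∑ i, b i
  have hz : z ≠ 0 := fun h => by
    simpa using Fintype.linearIndependent_iff.mp b.linearIndependent (fun _ => 1)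
      (by simpa using h) hι.some
  have hz_apply : ∀ σ, (z : K.Chains d) σ = ∑ i, (b i : K.Chains d) σ := fun σ => by
    rw [AddSubmonoidClass.coe_finsetSum, Finset.sum_apply]
  calc K.girth d * (Module.finrank (ZMod 2) (LinearMap.ker (K.boundary d)) + 1)
      = ∑ _i : ι, K.girth d + K.girth d := by
        rw [sum_const, card_univ, ← Module.finrank_eq_card_basis b, smul_eq_mul, mul_add_one,
          mul_comm]
    _ ≤ ∑ i, suppCard (b i : K.Chains d) + suppCard (z : K.Chains d) :=
        add_le_add (sum_le_sum fun i _ => K.girth_le_suppCard (b i).2 (by simpa using b.ne_zero i))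
          (K.girth_le_suppCard z.2 (by simpa using hz))
    _ ≤ 2 * K.fnum d := by
        simpa only [suppCard, hz_apply, fnum, Fintype.card_coe] using
          ZMod.two_sum_card_support_add_card_support_sum_le _ hb

end SComplex

open SComplex
theorem thm4_general {V : Type} [DecidableEq V] [Fintype V] (d : ℕ)
    (K : SComplex V)
    (hβ : 1 ≤ K.betti d) (hcb : K.HasCompleteBasis d 2)
    (k : ℕ) (hodd : Odd k) (hkd : k ≤ d) :
    ((K.girth d : ℤ) - 2) * (K.fnum d : ℤ) ≤
      (K.girth d : ℤ) *
        ((∑ i ∈ Finset.Icc 1 k,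
            (-1 : ℤ) ^ (i - 1) * ((K.fnum (d - i) : ℤ) - (K.betti (d - i) : ℤ))) - 1) := by
  have hZ : 0 < Module.finrank (ZMod 2) (LinearMap.ker (K.boundary d)) :=
    Nat.lt_of_lt_of_le hβ (Nat.sub_le _ _)
  have hgirth : (K.girth d : ℤ) * (Module.finrank (ZMod 2) (LinearMap.ker (K.boundary d)) + 1) ≤
      2 * K.fnum d := by
    exact_mod_cast K.girth_mul_finrank_ker_add_one_le hZ hcb
  have hfnum : (K.boundaryRank d : ℤ) + Module.finrank (ZMod 2) (LinearMap.ker (K.boundary d)) =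
      K.fnum d := by
    exact_mod_cast K.boundaryRank_add_finrank_ker d
  rw [K.sum_Icc_neg_one_pow_mul_fnum_sub_betti hkd, hodd.neg_one_pow]
  linear_combination hgirth - (K.girth d : ℤ) * hfnum +
    mul_nonneg (Int.natCast_nonneg (K.girth d)) (Int.natCast_nonneg (K.boundaryRank (d - k)))

/-- Theorem 4. -/
theorem thm4 {V : Type} [DecidableEq V] [Fintype V] (d : ℕ)
    (K : SComplex V) (hdim : K.IsDim d)
    (hβ : 1 ≤ K.betti d) (hcb : K.HasCompleteBasis d 2)
    (k : ℕ) (hodd : Odd k) (hk1 : 1 ≤ k) (hkd : k ≤ d) :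
    ((K.girth d : ℤ) - 2) * (K.fnum d : ℤ) ≤
      (K.girth d : ℤ) *
        ((∑ i ∈ Finset.Icc 1 k,
            (-1 : ℤ) ^ (i - 1) * ((K.fnum (d - i) : ℤ) - (K.betti (d - i) : ℤ))) - 1) :=
  thm4_general d K hβ hcb k hodd hkd
end
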